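/- arXiv:2201.03058 — 5 statements merged into one kernel-verified Lean document; each statement's English description precedes it below -/
import Mathlib

section
/- There is an isomorphism of abelian groups ℤ[u_1, …, u_n]/𝓘_λ ≅ ℤ[y_1, …, y_n]/I_λ. -/
/-!
The ring automorphism `u_i ↦ 1 - u_i` of `ℤ[u_1, …, u_n]` carries `I_λ` onto `𝓘_λ`. Fix an index
set `T` with `|T| = s` and let `q = p_{λ^∨}(s)`. Expanding `∏_{i ∈ A} (1 - u_i)` and counting the
`k`-subsets of `T` above a given `j`-subset gives
`e_k(1 - u_T) = ∑_j (-1)^j C(s - j, k - j) e_j(u_T)`,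
and Vandermonde's identity then turns this into
`h_d(u_T) = (-1)^d ∑_{k = s+1-q}^{d} C(q + d - s - 1, d - k) e_k(1 - u_T)`.
For `d ≥ s + 1 - q` this relation is unitriangular with diagonal `±1`, so both families generate
the same ideal.
-/

open MvPolynomial Finset

/-- The `k`-th elementary symmetric polynomial in the variables indexed by `T ⊆ {1,…,n}`. -/
noncomputable def esymmOn (n : ℕ) (T : Finset (Fin n)) (k : ℕ) : MvPolynomial (Fin n) ℤ :=
  ∑ A ∈ T.powersetCard k, ∏ i ∈ A, X i

/-- The dual-partition value `η_j = #{i : λ_i ≥ j}` (here `lam` is 0-indexed). -/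
def eta (l : ℕ) (lam : ℕ → ℕ) (j : ℕ) : ℕ :=
  ((Finset.range l).filter fun i => j ≤ lam i).card

/-- `p_{λ^∨}(s) = η_{n-s+1} + ⋯ + η_n`. -/
def pdual (n l : ℕ) (lam : ℕ → ℕ) (s : ℕ) : ℕ :=
  ∑ j ∈ Finset.Icc (n - s + 1) n, eta l lam j

/-- The generator `h_d(u_i)` of the K-theoretic Tanisaki ideal, for index set `T` and `q`. -/
noncomputable def hpoly (n : ℕ) (T : Finset (Fin n)) (q d : ℕ) : MvPolynomial (Fin n) ℤ :=
  if q = 0 then esymmOn n T d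
  else ∑ k ∈ Finset.range (d + 1),
    MvPolynomial.C ((-1 : ℤ) ^ (d - k) * ((q + d - k - 1).choose (q - 1) : ℤ)) * esymmOn n T k

/-- The K-theoretic Tanisaki ideal `𝓘_λ`. -/
noncomputable def KTanisaki (n l : ℕ) (lam : ℕ → ℕ) : Ideal (MvPolynomial (Fin n) ℤ) :=
  Ideal.span {p | ∃ s : ℕ, 1 ≤ s ∧ s ≤ n ∧ ∃ T : Finset (Fin n), T.card = s ∧
    ∃ d : ℕ, s + 1 - pdual n l lam s ≤ d ∧ p = hpoly n T (pdual n l lam s) d}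

/-- The (cohomological) Tanisaki ideal `I_λ`. -/
noncomputable def Tanisaki (n l : ℕ) (lam : ℕ → ℕ) : Ideal (MvPolynomial (Fin n) ℤ) :=
  Ideal.span {p | ∃ s : ℕ, 1 ≤ s ∧ s ≤ n ∧ ∃ T : Finset (Fin n), T.card = s ∧
    ∃ d : ℕ, s + 1 - pdual n l lam s ≤ d ∧ p = esymmOn n T d}

theorem Finset.sum_powersetCard_sum_powerset {α M : Type*} [DecidableEq α] [AddCommMonoid M]
    (T : Finset α) (k : ℕ) (f : Finset α → M) :
    ∑ A ∈ T.powersetCard k, ∑ B ∈ A.powerset, f B =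
      ∑ j ∈ range (k + 1), (#T - j).choose (k - j) • ∑ B ∈ T.powersetCard j, f B := by
  calc ∑ A ∈ T.powersetCard k, ∑ B ∈ A.powerset, f B
      = ∑ A ∈ T.powersetCard k, ∑ j ∈ range (k + 1), ∑ B ∈ A.powersetCard j, f B :=
        sum_congr rfl fun A hA => by rw [sum_powerset, (mem_powersetCard.1 hA).2]
    _ = ∑ j ∈ range (k + 1), ∑ A ∈ T.powersetCard k, ∑ B ∈ A.powersetCard j, f B := sum_comm
    _ = _ := by
      refine sum_congr rfl fun j hj => ?_
      rw [sum_comm' (t' := T.powersetCard j) (s' := fun B => (T.powersetCard k).filter (B ⊆ ·))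
        fun A B => by simp only [mem_powersetCard, mem_filter]; grind, smul_sum]
      refine sum_congr rfl fun B hB => ?_
      obtain ⟨hBT, rfl⟩ := mem_powersetCard.1 hB
      rw [sum_const,
        card_filter_powersetCard_subset B T k hBT (by simpa [Nat.lt_succ_iff] using hj)]

noncomputable def oneSubX (σ R : Type*) [CommRing R] : MvPolynomial σ R ≃ₐ[R] MvPolynomial σ R :=
  AlgEquiv.ofAlgHom (aeval fun i => 1 - X i) (aeval fun i => 1 - X i)
    (algHom_ext fun i => by simp) (algHom_ext fun i => by simp)

@[simp]
theorem oneSubX_X {σ R : Type*} [CommRing R] (i : σ) : oneSubX σ R (X i) = 1 - X i :=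
  aeval_X _ i

theorem esymmOn_eq_zero_of_card_lt {n : ℕ} {T : Finset (Fin n)} {k : ℕ} (h : #T < k) :
    esymmOn n T k = 0 := by
  rw [esymmOn, powersetCard_eq_empty.2 h, sum_empty]

theorem oneSubX_esymmOn (n : ℕ) (T : Finset (Fin n)) (k : ℕ) :
    oneSubX (Fin n) ℤ (esymmOn n T k) = ∑ j ∈ range (k + 1),
      C ((-1 : ℤ) ^ j * ((#T - j).choose (k - j) : ℤ)) * esymmOn n T j := by
  calc oneSubX (Fin n) ℤ (esymmOn n T k)
      = ∑ A ∈ T.powersetCard k, ∑ B ∈ A.powerset, (-1) ^ #B * ∏ i ∈ B, X i := by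
        simp [esymmOn, prod_sub]
    _ = _ := by
      rw [sum_powersetCard_sum_powerset]
      refine sum_congr rfl fun j _ => ?_
      rw [esymmOn, mul_sum, smul_sum]
      refine sum_congr rfl fun B hB => ?_
      rw [(mem_powersetCard.1 hB).2, nsmul_eq_mul, C_mul, ← C_eq_coe_nat]
      simp only [map_pow, map_neg, map_one, map_natCast]
      ring

theorem Nat.sum_Icc_choose_mul_choose (a b j d : ℕ) (hjd : j ≤ d) :
    ∑ k ∈ Icc j d, a.choose (d - k) * b.choose (k - j) = (a + b).choose (d - j) := by
  rw [Nat.add_choose_eq, Nat.sum_antidiagonal_eq_sum_range_succ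
    (fun x y => a.choose x * b.choose y) (d - j)]
  refine sum_nbij' (fun k => d - k) (fun i => d - i) ?_ ?_ ?_ ?_ ?_ <;>
    intro k hk <;> simp only [mem_Icc, mem_range] at hk ⊢ <;> first | omega | (congr 2; omega)

theorem hpoly_coeff_eq_sum (q d s j : ℕ) (hq : 1 ≤ q) (hsd : s + 1 ≤ q + d) (hjs : j ≤ s)
    (hjd : j ≤ d) :
    (-1 : ℤ) ^ (d - j) * ((q + d - j - 1).choose (q - 1) : ℤ) = ∑ k ∈ Icc j d,
      (-1) ^ d * ((q + d - s - 1).choose (d - k) : ℤ) *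
        ((-1) ^ j * ((s - j).choose (k - j) : ℤ)) := by
  have hsign : (-1 : ℤ) ^ d * (-1) ^ j = (-1) ^ (d - j) := by
    rw [← Nat.sub_add_cancel hjd, pow_add, mul_assoc, ← pow_add, ← two_mul, pow_mul]
    simp
  have hchoose : (q + d - j - 1).choose (q - 1) = (q + d - j - 1).choose (d - j) :=
    Nat.choose_symm_of_eq_add (by omega)
  rw [hchoose, show q + d - j - 1 = (q + d - s - 1) + (s - j) by omega,
    ← Nat.sum_Icc_choose_mul_choose _ _ _ _ hjd, ← hsign]
  push_cast
  rw [mul_sum]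
  exact sum_congr rfl fun k _ => by ring

theorem hpoly_eq_sum_oneSubX_esymmOn (n : ℕ) (T : Finset (Fin n)) (q d : ℕ)
    (hd : #T + 1 - q ≤ d) :
    hpoly n T q d = ∑ k ∈ Icc (#T + 1 - q) d,
      C ((-1 : ℤ) ^ d * ((q + d - #T - 1).choose (d - k) : ℤ)) *
        oneSubX (Fin n) ℤ (esymmOn n T k) := by
  rcases Nat.eq_zero_or_pos q with rfl | hq
  · rw [hpoly, if_pos rfl, esymmOn_eq_zero_of_card_lt (by omega)]
    refine (sum_eq_zero fun k hk => ?_).symm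
    rw [esymmOn_eq_zero_of_card_lt (by simp only [mem_Icc] at hk; omega), map_zero, mul_zero]
  have hsub : Icc (#T + 1 - q) d ⊆ range (d + 1) := fun k hk => by
    simp only [mem_Icc, mem_range] at hk ⊢; omega
  rw [sum_subset hsub fun k hk hk' => ?vanish, hpoly, if_neg hq.ne']
  case vanish =>
    simp only [mem_Icc, mem_range] at hk hk'
    rw [Nat.choose_eq_zero_of_lt (by omega)]
    simp
  simp_rw [oneSubX_esymmOn, mul_sum]
  rw [sum_comm' (t' := range (d + 1)) (s' := fun j => Icc j d)
    fun k j => by simp only [mem_range, mem_Icc]; omega]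
  refine sum_congr rfl fun j hj => ?_
  rcases le_or_gt j #T with hjs | hjs
  · rw [hpoly_coeff_eq_sum q d #T j hq (by omega) hjs (by simpa [Nat.lt_succ_iff] using hj),
      map_sum, sum_mul]
    exact sum_congr rfl fun k _ => by rw [C_mul, mul_assoc]
  · simp [esymmOn_eq_zero_of_card_lt hjs]

theorem Submodule.mem_of_unitriangular {R M : Type*} [Ring R] [AddCommGroup M] [Module R M]
    {J : Submodule R M} {e g : ℕ → M} {c : ℕ → ℕ → R} {m : ℕ}
    (hg : ∀ d, m ≤ d → g d = ∑ k ∈ Icc m d, c d k • e k) (hc : ∀ d, m ≤ d → IsUnit (c d d))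
    (hJ : ∀ d, m ≤ d → g d ∈ J) (d : ℕ) (hd : m ≤ d) : e d ∈ J := by
  induction d using Nat.strong_induction_on with
  | _ d ih =>
  have hlower : ∑ k ∈ Ico m d, c d k • e k ∈ J :=
    J.sum_mem fun k hk => J.smul_mem _ (ih k (mem_Ico.1 hk).2 (mem_Ico.1 hk).1)
  have hgd := hJ d hd
  rwa [hg d hd, ← Ico_insert_right hd, sum_insert right_notMem_Ico, J.add_mem_iff_left hlower,
    J.smul_mem_iff_of_isUnit (hc d hd)] at hgd

theorem KTanisaki_eq_map_Tanisaki (n l : ℕ) (lam : ℕ → ℕ) :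
    KTanisaki n l lam = (Tanisaki n l lam).map (oneSubX (Fin n) ℤ : _ →+* _) := by
  rw [Tanisaki, Ideal.map_span]
  apply le_antisymm
  · rw [KTanisaki, Ideal.span_le]
    rintro _ ⟨_, hs1, hsn, T, rfl, d, hd, rfl⟩
    rw [SetLike.mem_coe, hpoly_eq_sum_oneSubX_esymmOn n T _ d hd]
    exact sum_mem fun k hk => Ideal.mul_mem_left _ _
      (Ideal.subset_span ⟨_, ⟨#T, hs1, hsn, T, rfl, k, (mem_Icc.1 hk).1, rfl⟩, rfl⟩)
  · rw [Ideal.span_le]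
    rintro _ ⟨_, ⟨_, hs1, hsn, T, rfl, d, hd, rfl⟩, rfl⟩
    refine Submodule.mem_of_unitriangular (J := KTanisaki n l lam)
      (e := fun k => oneSubX (Fin n) ℤ (esymmOn n T k)) (hpoly_eq_sum_oneSubX_esymmOn n T _)
      (fun d _ => ?_) (fun d hd => Ideal.subset_span ⟨#T, hs1, hsn, T, rfl, d, hd, rfl⟩) d hd
    simpa using (isUnit_neg_one.pow d).map (C : ℤ →+* MvPolynomial (Fin n) ℤ)

theorem KTanisaki_quotient_addEquiv_Tanisaki_quotient_general
    (n l : ℕ) (lam : ℕ → ℕ) :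
    Nonempty ((MvPolynomial (Fin n) ℤ ⧸ KTanisaki n l lam) ≃+
      (MvPolynomial (Fin n) ℤ ⧸ Tanisaki n l lam)) :=
  ⟨(Ideal.quotientEquivAlg _ _ (oneSubX (Fin n) ℤ)
    (KTanisaki_eq_map_Tanisaki n l lam)).symm.toAddEquiv⟩

/-- There is an isomorphism of abelian groups
ℤ[u_1,…,u_n]/𝓘_λ ≅ ℤ[y_1,…,y_n]/I_λ. -/
theorem KTanisaki_quotient_addEquiv_Tanisaki_quotient
    (n l : ℕ) (lam : ℕ → ℕ) (hn : 1 ≤ n)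
    (hmono : ∀ i j : ℕ, i ≤ j → lam j ≤ lam i)
    (hpos : ∀ i < l, 0 < lam i) (hzero : ∀ i, l ≤ i → lam i = 0)
    (hsum : ∑ i ∈ Finset.range l, lam i = n) :
    Nonempty ((MvPolynomial (Fin n) ℤ ⧸ KTanisaki n l lam) ≃+
      (MvPolynomial (Fin n) ℤ ⧸ Tanisaki n l lam)) :=
  KTanisaki_quotient_addEquiv_Tanisaki_quotient_general n l lam
end

section
/- Let 1 ≤ s ≤ n, i ∈ W_{n,s} and d ≥ s + 1 − p_{λ^∨}(s). Then the polynomial h_d(u_i) vanishes under the evaluation u_1 = u_2 = ⋯ = u_n = 1. -/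
open MvPolynomial Finset

/-!
At `u = 1` the polynomial `e_k(u_i)` becomes `C(s, k)` and the coefficient
`(-1)^j C(q+j-1, q-1)` is the generalized binomial coefficient `C(-q, j)`, so Vandermonde's
identity turns `h_d(1, …, 1)` into `C(s - q, d)`. Writing `p_{λ^∨}(s) = Σ_i (λ_i - (n - s))⁺`,
either some part of `λ` is at least `n - s` or all are smaller, and either way `p_{λ^∨}(s) ≤ s`;
hence `s - q` is a natural number smaller than `d` and `C(s - q, d) = 0`.
-/

lemma Finset.sum_tsub_le_tsub_of_le_sum {ι : Type*} (t : Finset ι) (f : ι → ℕ) {a : ℕ}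
    (ha : a ≤ ∑ i ∈ t, f i) : ∑ i ∈ t, (f i - a) ≤ ∑ i ∈ t, f i - a := by
  have hsplit : ∑ i ∈ t, (f i - a) + ∑ i ∈ t, min (f i) a = ∑ i ∈ t, f i := by
    rw [← sum_add_distrib]
    exact sum_congr rfl fun i _ => tsub_add_min
  have hmin : a ≤ ∑ i ∈ t, min (f i) a := by
    by_cases hbig : ∃ j ∈ t, a ≤ f j
    · obtain ⟨j, hj, hle⟩ := hbig
      exact (min_eq_right hle).symm.le.trans
        (single_le_sum (f := fun i => min (f i) a) (fun _ _ => Nat.zero_le _) hj)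
    · push Not at hbig
      rwa [sum_congr rfl fun i hi => min_eq_left (hbig i hi).le]
  omega

lemma Ring.choose_neg_natCast (q j : ℕ) (hq : q ≠ 0) :
    Ring.choose (-(q : ℤ)) j = (-1) ^ j * ((q + j - 1).choose (q - 1) : ℤ) := by
  have hcast : (q : ℤ) + j - 1 = ((q + j - 1 : ℕ) : ℤ) := by omega
  rw [Ring.choose_neg, hcast, Ring.choose_natCast, Units.smul_def, Int.coe_negOnePow_natCast,
    smul_eq_mul,
    Nat.choose_symm_of_eq_add (show q + j - 1 = j + (q - 1) by omega)]

lemma eval_one_esymmOn (n : ℕ) (T : Finset (Fin n)) (k : ℕ) :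
    eval (fun _ => (1 : ℤ)) (esymmOn n T k) = ((#T).choose k : ℤ) := by
  simp [esymmOn, card_powersetCard]

lemma eval_one_hpoly (n : ℕ) (T : Finset (Fin n)) (q d : ℕ) :
    eval (fun _ => (1 : ℤ)) (hpoly n T q d) = Ring.choose ((#T : ℤ) - q) d := by
  rcases eq_or_ne q 0 with rfl | hq
  · simp [hpoly, eval_one_esymmOn, Ring.choose_natCast]
  have hterm : ∀ k ∈ range (d + 1),
      eval (fun _ => (1 : ℤ)) (C ((-1 : ℤ) ^ (d - k) * ((q + d - k - 1).choose (q - 1) : ℤ)) *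
        esymmOn n T k) = Ring.choose (#T : ℤ) k * Ring.choose (-(q : ℤ)) (d - k) := by
    intro k hk
    have hidx : q + (d - k) - 1 = q + d - k - 1 := by
      rw [mem_range] at hk
      omega
    rw [map_mul, eval_C, eval_one_esymmOn, Ring.choose_natCast, Ring.choose_neg_natCast q _ hq,
      hidx]
    ring
  rw [hpoly, if_neg hq, map_sum, sum_congr rfl hterm, sub_eq_add_neg,
    Ring.add_choose_eq d (Commute.all _ _),
    Nat.sum_antidiagonal_eq_sum_range_succ_mk]

lemma pdual_eq_sum_tsub (n l : ℕ) (lam : ℕ → ℕ) (hle : ∀ i ∈ range l, lam i ≤ n) (s : ℕ) :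
    pdual n l lam s = ∑ i ∈ range l, (lam i - (n - s)) := by
  unfold pdual eta
  simp only [card_filter]
  rw [sum_comm]
  refine sum_congr rfl fun i hi => ?_
  have hIcc : (Icc (n - s + 1) n).filter (fun j => j ≤ lam i) = Icc (n - s + 1) (lam i) := by
    ext j
    simp only [mem_filter, mem_Icc]
    have := hle i hi
    omega
  rw [← card_filter, hIcc, Nat.card_Icc]
  omega

lemma pdual_le (n l : ℕ) (lam : ℕ → ℕ) (hsum : ∑ i ∈ range l, lam i = n) (s : ℕ) :
    pdual n l lam s ≤ s := by
  have hle : ∀ i ∈ range l, lam i ≤ n := fun i hi =>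
    hsum ▸ single_le_sum (fun _ _ => Nat.zero_le _) hi
  rw [pdual_eq_sum_tsub n l lam hle s]
  have := sum_tsub_le_tsub_of_le_sum (range l) lam (a := n - s) (by omega)
  omega

theorem hpoly_eval_one_eq_zero_general
    (n l : ℕ) (lam : ℕ → ℕ)
    (hsum : ∑ i ∈ Finset.range l, lam i = n)
    (s : ℕ)
    (T : Finset (Fin n)) (hT : T.card = s)
    (d : ℕ) (hd : s + 1 - pdual n l lam s ≤ d) :
    MvPolynomial.eval (fun _ => (1 : ℤ)) (hpoly n T (pdual n l lam s) d) = 0 := by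
  have hq : pdual n l lam s ≤ s := pdual_le n l lam hsum s
  have hcast : (s : ℤ) - pdual n l lam s = ((s - pdual n l lam s : ℕ) : ℤ) := by omega
  rw [eval_one_hpoly, hT, hcast, Ring.choose_natCast, Nat.choose_eq_zero_of_lt (by omega),
    Nat.cast_zero]

/-- For 1 ≤ s ≤ n, i ∈ W_{n,s} and d ≥ s + 1 − p_{λ^∨}(s), the polynomial
h_d(u_i) vanishes under the evaluation u_1 = ⋯ = u_n = 1. -/
theorem hpoly_eval_one_eq_zero
    (n l : ℕ) (lam : ℕ → ℕ) (hn : 1 ≤ n)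
    (hmono : ∀ i j : ℕ, i ≤ j → lam j ≤ lam i)
    (hpos : ∀ i < l, 0 < lam i) (hzero : ∀ i, l ≤ i → lam i = 0)
    (hsum : ∑ i ∈ Finset.range l, lam i = n)
    (s : ℕ) (hs1 : 1 ≤ s) (hsn : s ≤ n)
    (T : Finset (Fin n)) (hT : T.card = s)
    (d : ℕ) (hd : s + 1 - pdual n l lam s ≤ d) :
    MvPolynomial.eval (fun _ => (1 : ℤ)) (hpoly n T (pdual n l lam s) d) = 0 :=
  hpoly_eval_one_eq_zero_general n l lam hsum s T hT d hd
end

section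
/- Let U ⊆ ℂ^n be a linear subspace with dim_ℂ U = s, let 0 ≤ q ≤ s ≤ n, and for 1 ≤ m ≤ n let E_m denote the span of the first m standard basis vectors e_1, …, e_m of ℂ^n. Define σ_i = i for 1 ≤ i ≤ q and σ_i = n − s + i for q < i ≤ s. Then E_q ⊆ U if and only if dim_ℂ(U ∩ E_{σ_i}) ≥ i for all 1 ≤ i ≤ s. -/
/-- `E_m` = span of the first `m` standard basis vectors of ℂ^n. -/
noncomputable def stdFlag (n m : ℕ) : Submodule ℂ (Fin n → ℂ) :=
  Submodule.span ℂ ((fun i : Fin n => Pi.single i (1 : ℂ)) '' {i : Fin n | (i : ℕ) < m})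

lemma stdFlag_mono (n : ℕ) {a b : ℕ} (h : a ≤ b) : stdFlag n a ≤ stdFlag n b := by
  apply Submodule.span_mono
  apply Set.image_mono
  intro i hi
  exact lt_of_lt_of_le hi h

lemma finrank_stdFlag (n m : ℕ) (h : m ≤ n) :
    Module.finrank ℂ (stdFlag n m) = m := by
  set f : Fin n → (Fin n → ℂ) := fun i => Pi.single i (1 : ℂ) with hf
  have hfun : ⇑(Pi.basisFun ℂ (Fin n)) = f := funext fun i => Pi.basisFun_apply ℂ (Fin n) i
  have hli : LinearIndependent ℂ
      (fun i : {i : Fin n // (i : ℕ) < m} => f (i : Fin n)) := by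
    have hb := (Pi.basisFun ℂ (Fin n)).linearIndependent
    rw [hfun] at hb
    exact hb.comp (Subtype.val : {i : Fin n // (i : ℕ) < m} → Fin n) Subtype.val_injective
  have hrange : f '' {i : Fin n | (i : ℕ) < m}
      = Set.range (fun i : {i : Fin n // (i : ℕ) < m} => f (i : Fin n)) :=
    Set.image_eq_range f _
  have hcard : Fintype.card {i : Fin n // (i : ℕ) < m} = m := by
    have e : {i : Fin n // (i : ℕ) < m} ≃ Fin m :=
      { toFun := fun i => ⟨i.1, i.2⟩
        invFun := fun j => ⟨⟨j, lt_of_lt_of_le j.2 h⟩, j.2⟩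
        left_inv := fun i => rfl
        right_inv := fun j => rfl }
    simp [Fintype.card_congr e]
  rw [stdFlag, hrange, finrank_span_eq_card hli, hcard]

/-- Let U ⊆ ℂ^n be a subspace with dim U = s, let 0 ≤ q ≤ s ≤ n, and set
σ_i = i for 1 ≤ i ≤ q and σ_i = n − s + i for q < i ≤ s.  Then E_q ⊆ U if and only if
dim(U ∩ E_{σ_i}) ≥ i for all 1 ≤ i ≤ s. -/
theorem stdFlag_le_iff_schubert_conditions
    (n s q : ℕ) (hqs : q ≤ s) (hsn : s ≤ n)
    (U : Submodule ℂ (Fin n → ℂ)) (hU : Module.finrank ℂ U = s) :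
    stdFlag n q ≤ U ↔
      ∀ i : ℕ, 1 ≤ i → i ≤ s →
        i ≤ Module.finrank ℂ ↥(U ⊓ stdFlag n (if i ≤ q then i else n - s + i)) := by
  constructor
  · intro hle i hi1 his
    by_cases hiq : i ≤ q
    · -- E_i ≤ E_q ≤ U, so U ⊓ E_i = E_i
      rw [if_pos hiq]
      have h1 : stdFlag n i ≤ U := le_trans (stdFlag_mono n hiq) hle
      have : U ⊓ stdFlag n i = stdFlag n i := inf_eq_right.mpr h1
      rw [this, finrank_stdFlag n i (le_trans his hsn)]
    · -- dimension count
      rw [if_neg hiq]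
      have hm : n - s + i ≤ n := by omega
      have hW := finrank_stdFlag n (n - s + i) hm
      have hsum := Submodule.finrank_sup_add_finrank_inf_eq U (stdFlag n (n - s + i))
      have hsup : Module.finrank ℂ ↥(U ⊔ stdFlag n (n - s + i)) ≤ n := by
        have := Submodule.finrank_le (U ⊔ stdFlag n (n - s + i))
        simpa [Module.finrank_pi] using this
      omega
  · intro hcond
    rcases Nat.eq_zero_or_pos q with hq0 | hq0
    · subst hq0
      have : stdFlag n 0 = ⊥ := by
        simp [stdFlag, Set.eq_empty_iff_forall_notMem]
      rw [this]; exact bot_le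
    · have hq := hcond q hq0 hqs
      rw [if_pos le_rfl] at hq
      have hEq : Module.finrank ℂ (stdFlag n q) = q := finrank_stdFlag n q (le_trans hqs hsn)
      have hle : U ⊓ stdFlag n q ≤ stdFlag n q := inf_le_right
      have : U ⊓ stdFlag n q = stdFlag n q := by
        apply Submodule.eq_of_le_of_finrank_le hle
        omega
      calc stdFlag n q = U ⊓ stdFlag n q := this.symm
        _ ≤ U := inf_le_left
end

section
/- Let α : R → S be the ring isomorphism determined by α(u_j) = y_j + 1 for 1 ≤ j ≤ n. Then for every k ≥ 0, α(R^k) = S^k, and α(𝓘_λ ∩ R^k) + S^{k−1} = (I_λ ∩ S^k) + S^{k−1} as additive subgroups of S. -/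
open MvPolynomial Finset

/-- `R^k`: the additive group of polynomials of total degree ≤ k vanishing at (1,…,1). -/
noncomputable def RkGrp (n k : ℕ) : AddSubgroup (MvPolynomial (Fin n) ℤ) where
  carrier := {p | p.totalDegree ≤ k ∧ MvPolynomial.eval (fun _ => (1 : ℤ)) p = 0}
  add_mem' := by
    intro a b ha hb
    exact ⟨le_trans (MvPolynomial.totalDegree_add a b) (max_le ha.1 hb.1), by simp [ha.2, hb.2]⟩
  zero_mem' := by simp
  neg_mem' := by
    intro a ha
    exact ⟨by rw [MvPolynomial.totalDegree_neg]; exact ha.1, by simp [ha.2]⟩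

/-- `S^k`: the additive group of polynomials of total degree ≤ k with zero constant term. -/
noncomputable def SkLeGrp (n k : ℕ) : AddSubgroup (MvPolynomial (Fin n) ℤ) where
  carrier := {p | p.totalDegree ≤ k ∧ MvPolynomial.constantCoeff p = 0}
  add_mem' := by
    intro a b ha hb
    exact ⟨le_trans (MvPolynomial.totalDegree_add a b) (max_le ha.1 hb.1), by simp [ha.2, hb.2]⟩
  zero_mem' := by simp
  neg_mem' := by
    intro a ha
    exact ⟨by rw [MvPolynomial.totalDegree_neg]; exact ha.1, by simp [ha.2]⟩

/-!
The generators `h_d` of `𝓘_λ` attached to `T` with `#T = s` and `q = p_{λ^∨}(s)` are the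
coefficients of `∏_{i ∈ T} (1 + u_i t) · (1 + t)^{-q}`. Substituting `u_i = 1 + y_i` turns the
product into `∑_m e_m(y) t^m (1 + t)^{s-m}`, so `α(h_d) = ∑_m binom(s - m - q, d - m) e_m(y)`.
For `d ≥ s + 1 - q` the coefficients with `m ≤ s - q` vanish and the one with `m = d` is `1`; this
unitriangularity gives `α(𝓘_λ) = I_λ`. As `α` and `α⁻¹` are affine substitutions they preserve
total degree, and the constant term of `α(p)` is `p(1, …, 1)`, so `α(R^k) = S^k` and even
`α(𝓘_λ ∩ R^k) = I_λ ∩ S^k`.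
-/

theorem Ring.choose_natCast_add_neg_natCast_eq_zero {a b j : ℕ} (hba : b ≤ a) (hj : a < b + j) :
    Ring.choose ((a : ℤ) + -b) j = 0 := by
  rw [← sub_eq_add_neg, ← Nat.cast_sub hba, Ring.choose_natCast,
    Nat.choose_eq_zero_of_lt (by omega), Nat.cast_zero]

namespace MvPolynomial

variable {σ τ R : Type*} [CommSemiring R]

theorem totalDegree_algHom_le (φ : MvPolynomial σ R →ₐ[R] MvPolynomial τ R)
    (hφ : ∀ i, (φ (X i)).totalDegree ≤ 1) (p : MvPolynomial σ R) :
    (φ p).totalDegree ≤ p.totalDegree := by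
  conv_lhs => rw [p.as_sum, map_sum]
  refine (totalDegree_finsetSum _ _).trans (Finset.sup_le fun v hv => ?_)
  refine le_trans ?_ (le_totalDegree hv)
  rw [monomial_eq, map_mul, map_finsuppProd, ← algebraMap_eq, φ.commutes, algebraMap_eq]
  refine (totalDegree_mul _ _).trans ?_
  rw [totalDegree_C, zero_add]
  refine (totalDegree_finsetProd _ _).trans (Finset.sum_le_sum fun i _ => ?_)
  dsimp only
  rw [map_pow]
  exact (totalDegree_pow _ _).trans (by simpa using Nat.mul_le_mul_left (v i) (hφ i))

theorem totalDegree_algEquiv_eq (α : MvPolynomial σ R ≃ₐ[R] MvPolynomial σ R)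
    (hα : ∀ i, (α (X i)).totalDegree ≤ 1) (hα' : ∀ i, (α.symm (X i)).totalDegree ≤ 1)
    (p : MvPolynomial σ R) : (α p).totalDegree = p.totalDegree :=
  (totalDegree_algHom_le α.toAlgHom hα p).antisymm <| by
    simpa using totalDegree_algHom_le α.symm.toAlgHom hα' (α p)

theorem constantCoeff_algHom_apply (φ : MvPolynomial σ R →ₐ[R] MvPolynomial τ R)
    (p : MvPolynomial σ R) :
    constantCoeff (φ p) = eval (fun i => constantCoeff (φ (X i))) p := by
  refine RingHom.congr_fun (ringHom_ext (f := constantCoeff.comp φ.toRingHom) ?_ ?_) p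
  · intro r
    simp [← algebraMap_eq]
  · intro i
    simp

theorem totalDegree_X_add_C_le [Nontrivial R] (i : σ) (r : R) :
    (X i + C r : MvPolynomial σ R).totalDegree ≤ 1 :=
  (totalDegree_add _ _).trans (max_le (totalDegree_X i).le ((totalDegree_C r).trans_le zero_le_one))

end MvPolynomial

theorem AddSubgroup.map_equiv_eq_of_forall_mem_iff {M N : Type*} [AddGroup M] [AddGroup N]
    (e : M ≃+ N) {G : AddSubgroup M} {H : AddSubgroup N} (h : ∀ p, p ∈ G ↔ e p ∈ H) :
    G.map e.toAddMonoidHom = H := by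
  ext y
  rw [AddSubgroup.mem_map_equiv, h, e.apply_symm_apply]

namespace PowerSeries

variable {ι A : Type*} [CommRing A]

theorem coeff_prod_one_add_C_mul_X (x : ι → A) (T : Finset ι) (k : ℕ) :
    coeff k (∏ i ∈ T, (1 + C (x i) * X)) = (T.val.map x).esymm k := by
  classical
  simp_rw [prod_one_add, prod_mul_distrib, prod_const, ← map_prod, map_sum, coeff_C_mul_X_pow,
    ← sum_filter, Finset.esymm_map_val, powersetCard_eq_filter, eq_comm (a := k)]

theorem prod_one_add_C_add_one_mul_X (x : ι → A) (T : Finset ι) :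
    ∏ i ∈ T, (1 + C (x i + 1) * X) =
      ∑ m ∈ range (#T + 1), C ((T.val.map x).esymm m) * X ^ m * (1 + X) ^ (#T - m) := by
  classical
  have split (i : ι) : 1 + C (x i + 1) * X = C (x i) * X + (1 + X) := by
    rw [map_add, map_one]; ring
  simp_rw [split]
  rw [prod_add, sum_powerset]
  simp_rw [Finset.esymm_map_val, map_sum, sum_mul]
  refine sum_congr rfl fun m _ => sum_congr rfl fun B hB => ?_
  obtain ⟨hBT, rfl⟩ := mem_powersetCard.1 hB
  rw [prod_mul_distrib, prod_const, prod_const, card_sdiff_of_subset hBT, map_prod]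

theorem map_binomialSeries {B : Type*} [CommRing B] (f : A →+* B) (r : ℤ) :
    map f (binomialSeries A r) = binomialSeries B r := by
  ext n
  simp

theorem coeff_binomialSeries_neg_natCast {q : ℕ} (hq : 0 < q) (j : ℕ) :
    coeff j (binomialSeries A (-(q : ℤ))) = (-1) ^ j * ((q - 1 + j).choose (q - 1) : A) := by
  rw [← rescale_neg_one_invOneSubPow, coeff_rescale,
    invOneSubPow_val_eq_mk_sub_one_add_choose_of_pos _ _ hq, coeff_mk]

theorem coeff_prod_one_add_C_add_one_mul_X_mul_binomialSeries (x : ι → A) (T : Finset ι)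
    (r : ℤ) (d : ℕ) :
    coeff d ((∏ i ∈ T, (1 + C (x i + 1) * X)) * binomialSeries A r) =
      ∑ m ∈ range (#T + 1),
        (if m ≤ d then Ring.choose ((#T - m : ℕ) + r) (d - m) else 0) • (T.val.map x).esymm m := by
  rw [prod_one_add_C_add_one_mul_X, sum_mul, map_sum]
  refine sum_congr rfl fun m _ => ?_
  rw [mul_assoc, mul_assoc, ← binomialSeries_nat (R := ℤ), ← binomialSeries_add, coeff_C_mul,
    coeff_X_pow_mul']
  split_ifs
  · rw [binomialSeries_coeff, mul_comm, Int.smul_one_eq_cast, zsmul_eq_mul]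
  · rw [zero_smul, mul_zero]

end PowerSeries

theorem hpoly_eq_coeff (n : ℕ) (T : Finset (Fin n)) (q d : ℕ) :
    hpoly n T q d = PowerSeries.coeff d ((∏ i ∈ T, (1 + PowerSeries.C (X i) * PowerSeries.X)) *
      PowerSeries.binomialSeries _ (-(q : ℤ))) := by
  have hesymm (k : ℕ) : esymmOn n T k = (T.val.map X).esymm k := (Finset.esymm_map_val _ _ _).symm
  rw [hpoly]
  split_ifs with hq
  · rw [hq, Nat.cast_zero, neg_zero, PowerSeries.binomialSeries_zero, mul_one,
      PowerSeries.coeff_prod_one_add_C_mul_X, hesymm]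
  · rw [PowerSeries.coeff_mul, Nat.sum_antidiagonal_eq_sum_range_succ_mk]
    refine sum_congr rfl fun k hk => ?_
    rw [PowerSeries.coeff_prod_one_add_C_mul_X, PowerSeries.coeff_binomialSeries_neg_natCast
      (Nat.pos_of_ne_zero hq), hesymm, mul_comm, map_mul, map_pow, map_neg, map_one, map_natCast,
      show q - 1 + (d - k) = q + d - k - 1 by grind]

section Shift

variable {n : ℕ} (φ : MvPolynomial (Fin n) ℤ →+* MvPolynomial (Fin n) ℤ) (T : Finset (Fin n))

theorem map_hpoly (hφ : ∀ j, φ (X j) = X j + 1) (q d : ℕ) :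
    φ (hpoly n T q d) = ∑ m ∈ range (#T + 1),
      (if m ≤ d then Ring.choose (((#T - m : ℕ) : ℤ) + -q) (d - m) else 0) • esymmOn n T m := by
  rw [hpoly_eq_coeff, ← PowerSeries.coeff_map, map_mul, map_prod, PowerSeries.map_binomialSeries]
  simp_rw [map_add, map_one, map_mul, PowerSeries.map_C, PowerSeries.map_X, hφ]
  rw [PowerSeries.coeff_prod_one_add_C_add_one_mul_X_mul_binomialSeries]
  simp_rw [Finset.esymm_map_val, esymmOn]

variable {T} in
theorem ite_smul_esymmOn_mem {I : Ideal (MvPolynomial (Fin n) ℤ)} {q d m : ℕ} (hd : #T + 1 - q ≤ d)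
    (hI : #T + 1 - q ≤ m → m ≤ d → esymmOn n T m ∈ I) :
    (if m ≤ d then Ring.choose (((#T - m : ℕ) : ℤ) + -q) (d - m) else 0) • esymmOn n T m ∈ I := by
  split_ifs with hmd
  · by_cases hm : #T + 1 - q ≤ m
    · exact zsmul_mem (hI hm hmd) _
    · rw [Ring.choose_natCast_add_neg_natCast_eq_zero (by omega) (by omega), zero_smul]
      exact zero_mem I
  · rw [zero_smul]
    exact zero_mem I

theorem map_hpoly_mem (hφ : ∀ j, φ (X j) = X j + 1) {q : ℕ} {I : Ideal (MvPolynomial (Fin n) ℤ)}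
    (hI : ∀ m, #T + 1 - q ≤ m → esymmOn n T m ∈ I) {d : ℕ} (hd : #T + 1 - q ≤ d) :
    φ (hpoly n T q d) ∈ I := by
  rw [map_hpoly φ T hφ]
  exact sum_mem fun m _ => ite_smul_esymmOn_mem hd fun hm _ => hI m hm

theorem esymmOn_mem_of_map_hpoly_mem (hφ : ∀ j, φ (X j) = X j + 1) {q : ℕ}
    {J : Ideal (MvPolynomial (Fin n) ℤ)} (hJ : ∀ d, #T + 1 - q ≤ d → φ (hpoly n T q d) ∈ J)
    (d : ℕ) (hd : #T + 1 - q ≤ d) : esymmOn n T d ∈ J := by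
  induction d using Nat.strong_induction_on with
  | _ d ih =>
    rcases lt_or_ge #T d with hTd | hdT
    · rw [esymmOn_eq_zero_of_card_lt hTd]
      exact zero_mem J
    have hexpand := hJ d hd
    rw [map_hpoly φ T hφ, ← add_sum_erase _ _ (mem_range.2 (Nat.lt_succ_of_le hdT)), if_pos le_rfl,
      Nat.sub_self, Ring.choose_zero_right, one_smul] at hexpand
    refine (add_mem_cancel_right (sum_mem fun m hm => ite_smul_esymmOn_mem hd ?_)).1 hexpand
    exact fun hqm hmd => ih m (lt_of_le_of_ne hmd (ne_of_mem_erase hm)) hqm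

end Shift
section Generators

variable {n l : ℕ} {lam : ℕ → ℕ} {T : Finset (Fin n)} {d : ℕ}

theorem hpoly_mem_KTanisaki (h1 : 1 ≤ #T) (hn : #T ≤ n) (hd : #T + 1 - pdual n l lam #T ≤ d) :
    hpoly n T (pdual n l lam #T) d ∈ KTanisaki n l lam :=
  Ideal.subset_span ⟨_, h1, hn, T, rfl, d, hd, rfl⟩

theorem esymmOn_mem_Tanisaki (h1 : 1 ≤ #T) (hn : #T ≤ n) (hd : #T + 1 - pdual n l lam #T ≤ d) :
    esymmOn n T d ∈ Tanisaki n l lam :=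
  Ideal.subset_span ⟨_, h1, hn, T, rfl, d, hd, rfl⟩

end Generators

theorem map_KTanisaki {n : ℕ} (φ : MvPolynomial (Fin n) ℤ →+* MvPolynomial (Fin n) ℤ)
    (hφ : ∀ j, φ (X j) = X j + 1) (l : ℕ) (lam : ℕ → ℕ) :
    Ideal.map φ (KTanisaki n l lam) = Tanisaki n l lam := by
  apply le_antisymm
  · rw [Ideal.map_le_iff_le_comap, KTanisaki, Ideal.span_le]
    rintro _ ⟨s, hs1, hsn, T, rfl, d, hd, rfl⟩
    exact map_hpoly_mem φ T hφ (fun m hm => esymmOn_mem_Tanisaki hs1 hsn hm) hd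
  · rw [Tanisaki, Ideal.span_le]
    rintro _ ⟨s, hs1, hsn, T, rfl, d, hd, rfl⟩
    exact esymmOn_mem_of_map_hpoly_mem φ T hφ
      (fun d hd => Ideal.mem_map_of_mem φ (hpoly_mem_KTanisaki hs1 hsn hd)) d hd

theorem mem_RkGrp_iff {n k : ℕ} (α : MvPolynomial (Fin n) ℤ ≃+* MvPolynomial (Fin n) ℤ)
    (hα : ∀ j, α (X j) = X j + 1) (p : MvPolynomial (Fin n) ℤ) :
    p ∈ RkGrp n k ↔ α p ∈ SkLeGrp n k := by
  have hα' (j : Fin n) : α.symm (X j) = X j + C (-1) := α.symm_apply_eq.2 (by simp [hα])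
  let αℤ : MvPolynomial (Fin n) ℤ ≃ₐ[ℤ] MvPolynomial (Fin n) ℤ :=
    AlgEquiv.ofRingEquiv (f := α) (by simp)
  have hdeg : (α p).totalDegree = p.totalDegree :=
    totalDegree_algEquiv_eq αℤ
      (fun j => by simpa [αℤ, hα] using totalDegree_X_add_C_le (R := ℤ) j 1)
      (fun j => by simpa [αℤ, hα'] using totalDegree_X_add_C_le (R := ℤ) j (-1)) p
  have hconst : constantCoeff (α p) = eval (fun _ => 1) p := by
    simpa [αℤ, hα] using constantCoeff_algHom_apply αℤ.toAlgHom p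
  change _ ∧ _ ↔ _ ∧ _
  rw [hdeg, hconst]

theorem ringEquiv_maps_filtration_and_ideals_general
    (n l : ℕ) (lam : ℕ → ℕ)
    (α : MvPolynomial (Fin n) ℤ ≃+* MvPolynomial (Fin n) ℤ)
    (hα : ∀ j : Fin n, α (MvPolynomial.X j) = MvPolynomial.X j + 1) :
    ∀ k : ℕ,
      (RkGrp n k).map α.toAddMonoidHom = SkLeGrp n k ∧
      (((KTanisaki n l lam).toAddSubgroup ⊓ RkGrp n k).map α.toAddMonoidHom ⊔ SkLeGrp n (k - 1))
        = (((Tanisaki n l lam).toAddSubgroup ⊓ SkLeGrp n k) ⊔ SkLeGrp n (k - 1)) := by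
  intro k
  have hK (p) : p ∈ KTanisaki n l lam ↔ α p ∈ Tanisaki n l lam := by
    rw [← map_KTanisaki (α : MvPolynomial (Fin n) ℤ →+* _) hα]
    exact Ideal.apply_mem_of_equiv_iff.symm
  have hR := mem_RkGrp_iff (k := k) α hα
  exact ⟨AddSubgroup.map_equiv_eq_of_forall_mem_iff α.toAddEquiv hR,
    congrArg (· ⊔ SkLeGrp n (k - 1))
      (AddSubgroup.map_equiv_eq_of_forall_mem_iff α.toAddEquiv fun p => and_congr (hK p) (hR p))⟩

/-- Let α : R → S be the ring isomorphism determined by α(u_j) = y_j + 1.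
Then for every k ≥ 0, α(R^k) = S^k, and α(𝓘_λ ∩ R^k) + S^{k−1} = (I_λ ∩ S^k) + S^{k−1}
as additive subgroups of S. -/
theorem ringEquiv_maps_filtration_and_ideals
    (n l : ℕ) (lam : ℕ → ℕ) (hn : 1 ≤ n)
    (hmono : ∀ i j : ℕ, i ≤ j → lam j ≤ lam i)
    (hpos : ∀ i < l, 0 < lam i) (hzero : ∀ i, l ≤ i → lam i = 0)
    (hsum : ∑ i ∈ Finset.range l, lam i = n)
    (α : MvPolynomial (Fin n) ℤ ≃+* MvPolynomial (Fin n) ℤ)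
    (hα : ∀ j : Fin n, α (MvPolynomial.X j) = MvPolynomial.X j + 1) :
    ∀ k : ℕ,
      (RkGrp n k).map α.toAddMonoidHom = SkLeGrp n k ∧
      (((KTanisaki n l lam).toAddSubgroup ⊓ RkGrp n k).map α.toAddMonoidHom ⊔ SkLeGrp n (k - 1))
        = (((Tanisaki n l lam).toAddSubgroup ⊓ SkLeGrp n k) ⊔ SkLeGrp n (k - 1)) :=
  ringEquiv_maps_filtration_and_ideals_general n l lam α hα
end

section
/- For s = n one has q = p_{λ^∨}(n) = n, and the ideal of ℤ[u_1, …, u_n] generated by the elements h_d(u_1, …, u_n) for all d ≥ 1 equals the ideal generated by the elements e_k(u_1, …, u_n) − C(n,k) for 1 ≤ k ≤ n. -/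
open MvPolynomial Finset

/-!
With `q = n`, `∑ d, h_d t^d = E(t) (1 + t)⁻ⁿ` where `E(t) = ∑ k, e_k t^k`, because the
coefficients of `(1 + t)⁻ⁿ` are `(-1)^j C(n + j - 1, n - 1)`. Hence, modulo any ideal `K`,
all `h_d` with `d ≥ 1` vanish iff `E(t) (1 + t)⁻ⁿ ≡ 1`, iff `E(t) ≡ (1 + t)ⁿ`, iff every
`e_k - C(n, k)` lies in `K`. So the two ideals contain each other. Also
`p_{λ^∨}(n) = ∑_{j ≤ n} η_j = |λ| = n`.
-/
namespace PowerSeries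

variable {A : Type*} [CommRing A]

theorem coeff_one_add_X_pow (n k : ℕ) :
    coeff k ((1 + X : A⟦X⟧) ^ n) = n.choose k := by
  rw [← binomialSeries_nat (R := ℤ), binomialSeries_coeff, Ring.choose_natCast,
    Nat.cast_smul_eq_nsmul, nsmul_one]

theorem rescale_neg_one_invOneSubPow_mul_one_add_X_pow (n : ℕ) :
    rescale (-1 : A) (invOneSubPow A n) * (1 + X) ^ n = 1 := by
  rw [rescale_neg_one_invOneSubPow, ← binomialSeries_nat (R := ℤ), ← binomialSeries_add,
    neg_add_cancel, binomialSeries_zero]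

theorem map_mk_eq_map_mk_iff (K : Ideal A) (F G : A⟦X⟧) :
    map (Ideal.Quotient.mk K) F = map (Ideal.Quotient.mk K) G ↔
      ∀ k, coeff k F - coeff k G ∈ K := by
  simp only [PowerSeries.ext_iff, coeff_map, Ideal.Quotient.eq]

theorem forall_coeff_mul_sub_mem_iff {U : A⟦X⟧} (hU : IsUnit U) (K : Ideal A) (F G : A⟦X⟧) :
    (∀ k, coeff k (F * U) - coeff k (G * U) ∈ K) ↔ ∀ k, coeff k F - coeff k G ∈ K := by
  rw [← map_mk_eq_map_mk_iff, ← map_mk_eq_map_mk_iff, map_mul, map_mul,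
    (hU.map _).mul_left_inj]

end PowerSeries

theorem sum_eta_Icc_one (l m : ℕ) (lam : ℕ → ℕ) :
    ∑ j ∈ Icc 1 m, eta l lam j = ∑ i ∈ range l, min (lam i) m := by
  simp only [eta, card_filter]
  rw [sum_comm]
  refine sum_congr rfl fun i _ => ?_
  have : (Icc 1 m).filter (· ≤ lam i) = Icc 1 (min (lam i) m) := by
    ext j
    simp only [mem_filter, mem_Icc]
    omega
  rw [sum_boole, Nat.cast_id, this, Nat.card_Icc, Nat.add_sub_cancel]

theorem pdual_self_of_sum_eq (n l : ℕ) (lam : ℕ → ℕ) (hsum : ∑ i ∈ range l, lam i = n) :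
    pdual n l lam n = n := by
  rw [pdual, Nat.sub_self, zero_add, sum_eta_Icc_one]
  conv_rhs => rw [← hsum]
  refine sum_congr rfl fun i hi => min_eq_left ?_
  exact hsum ▸ single_le_sum (fun _ _ => Nat.zero_le _) hi

theorem esymmOn_univ_zero (n : ℕ) : esymmOn n univ 0 = 1 := by
  simp [esymmOn]

theorem esymmOn_univ_of_lt (n k : ℕ) (h : n < k) : esymmOn n univ k = 0 := by
  rw [esymmOn, powersetCard_eq_empty.mpr (by simpa using h), sum_empty]

theorem hpoly_univ_self_zero (n : ℕ) : hpoly n univ n 0 = 1 := by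
  unfold hpoly
  split_ifs <;> simp [esymmOn_univ_zero]

section Series

open PowerSeries

variable (n : ℕ)

noncomputable def esymmSeries : (MvPolynomial (Fin n) ℤ)⟦X⟧ :=
  mk (esymmOn n univ)

noncomputable def hpolySeries : (MvPolynomial (Fin n) ℤ)⟦X⟧ :=
  mk (hpoly n univ n)

/-- `rescale (-1) (invOneSubPow _ n)` is the series `(1 + X)⁻ⁿ`. -/
theorem hpolySeries_eq_esymmSeries_mul (hn : 1 ≤ n) :
    hpolySeries n = esymmSeries n * rescale (-1) ↑(invOneSubPow (MvPolynomial (Fin n) ℤ) n) := by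
  refine PowerSeries.ext fun d => ?_
  rw [hpolySeries, esymmSeries, coeff_mk, PowerSeries.coeff_mul,
    Nat.sum_antidiagonal_eq_sum_range_succ_mk, hpoly, if_neg (by omega)]
  refine sum_congr rfl fun k hk => ?_
  have hkd : k ≤ d := Nat.lt_succ_iff.mp (mem_range.mp hk)
  rw [coeff_mk, coeff_rescale, invOneSubPow_val_eq_mk_sub_one_add_choose_of_pos _ _ (by omega),
    coeff_mk, show n + d - k - 1 = n - 1 + (d - k) by omega, mul_comm]
  simp

theorem hpolySeries_mul_one_add_X_pow (hn : 1 ≤ n) :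
    hpolySeries n * (1 + PowerSeries.X) ^ n = esymmSeries n := by
  rw [hpolySeries_eq_esymmSeries_mul n hn, mul_assoc,
    rescale_neg_one_invOneSubPow_mul_one_add_X_pow, mul_one]

theorem forall_hpoly_mem_iff (hn : 1 ≤ n) (K : Ideal (MvPolynomial (Fin n) ℤ)) :
    (∀ d, 1 ≤ d → hpoly n univ n d ∈ K) ↔
      ∀ k, 1 ≤ k → k ≤ n → esymmOn n univ k - MvPolynomial.C (n.choose k : ℤ) ∈ K := by
  have hunit : IsUnit ((1 + PowerSeries.X : (MvPolynomial (Fin n) ℤ)⟦X⟧) ^ n) :=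
    (isUnit_iff_constantCoeff.mpr (by simp)).pow n
  have key := forall_coeff_mul_sub_mem_iff hunit K (hpolySeries n) 1
  rw [hpolySeries_mul_one_add_X_pow n hn, one_mul] at key
  simp only [esymmSeries, hpolySeries, coeff_mk, coeff_one_add_X_pow,
    PowerSeries.coeff_one] at key
  simp only [map_natCast]
  have hH : (∀ d, (hpoly n univ n d - if d = 0 then 1 else 0) ∈ K) ↔
      ∀ d, 1 ≤ d → hpoly n univ n d ∈ K := by
    refine ⟨fun h d hd => by simpa [Nat.one_le_iff_ne_zero.mp hd] using h d, fun h d => ?_⟩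
    rcases d with _ | d
    · simp [hpoly_univ_self_zero, K.zero_mem]
    · simpa using h (d + 1) d.succ_pos
  have hE : (∀ k, esymmOn n univ k - n.choose k ∈ K) ↔
      ∀ k, 1 ≤ k → k ≤ n → esymmOn n univ k - n.choose k ∈ K := by
    refine ⟨fun h k _ _ => h k, fun h k => ?_⟩
    rcases Nat.eq_zero_or_pos k with rfl | hk
    · simp [esymmOn_univ_zero, K.zero_mem]
    by_cases hkn : k ≤ n
    · exact h k hk hkn
    · simp [esymmOn_univ_of_lt n k (by omega), Nat.choose_eq_zero_of_lt (by omega : n < k),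
        K.zero_mem]
  exact hH.symm.trans (key.symm.trans hE)

end Series

theorem pdual_top_eq_and_full_hpoly_ideal_eq_esymm_ideal_general
    (n l : ℕ) (lam : ℕ → ℕ) (hn : 1 ≤ n)
    (hsum : ∑ i ∈ Finset.range l, lam i = n) :
    pdual n l lam n = n ∧
    Ideal.span {p : MvPolynomial (Fin n) ℤ |
        ∃ d : ℕ, 1 ≤ d ∧ p = hpoly n Finset.univ (pdual n l lam n) d} =
      Ideal.span {p : MvPolynomial (Fin n) ℤ |
        ∃ k : ℕ, 1 ≤ k ∧ k ≤ n ∧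
          p = esymmOn n Finset.univ k - MvPolynomial.C (n.choose k : ℤ)} := by
  have hq := pdual_self_of_sum_eq n l lam hsum
  refine ⟨hq, ?_⟩
  rw [hq]
  apply le_antisymm <;> rw [Ideal.span_le]
  · rintro _ ⟨d, hd, rfl⟩
    refine (forall_hpoly_mem_iff n hn _).mpr (fun k hk hkn => ?_) d hd
    exact Ideal.subset_span ⟨k, hk, hkn, rfl⟩
  · rintro _ ⟨k, hk, hkn, rfl⟩
    refine (forall_hpoly_mem_iff n hn _).mp (fun d hd => ?_) k hk hkn
    exact Ideal.subset_span ⟨d, hd, rfl⟩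

/-- For s = n one has q = p_{λ^∨}(n) = n, and the ideal of ℤ[u_1,…,u_n]
generated by the h_d(u_1,…,u_n) for all d ≥ 1 equals the ideal generated by the
e_k(u_1,…,u_n) − C(n,k) for 1 ≤ k ≤ n. -/
theorem pdual_top_eq_and_full_hpoly_ideal_eq_esymm_ideal
    (n l : ℕ) (lam : ℕ → ℕ) (hn : 1 ≤ n)
    (hmono : ∀ i j : ℕ, i ≤ j → lam j ≤ lam i)
    (hpos : ∀ i < l, 0 < lam i) (hzero : ∀ i, l ≤ i → lam i = 0)
    (hsum : ∑ i ∈ Finset.range l, lam i = n) :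
    pdual n l lam n = n ∧
    Ideal.span {p : MvPolynomial (Fin n) ℤ |
        ∃ d : ℕ, 1 ≤ d ∧ p = hpoly n Finset.univ (pdual n l lam n) d} =
      Ideal.span {p : MvPolynomial (Fin n) ℤ |
        ∃ k : ℕ, 1 ≤ k ∧ k ≤ n ∧
          p = esymmOn n Finset.univ k - MvPolynomial.C (n.choose k : ℤ)} :=
  pdual_top_eq_and_full_hpoly_ideal_eq_esymm_ideal_general n l lam hn hsum
end
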